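/- arXiv:2305.06619 — 4 statements merged into one kernel-verified Lean document; each statement's English description precedes it below -/
import Mathlib

section
/- For any positive integers k and m with 1 ≤ m ≤ 2^k, the minimum of |Im φ1| over all admissible k-shot codes (φ1, φ2) for the model (01;C1,C2;f) satisfying |Im φ2| = m equals the minimum, over all partitions {P_1, …, P_m} of A^k into m nonempty blocks, of max_{1 ≤ i ≤ m} χ(G(A^k, P_i)), where χ(G(A^k, P_i)) is the minimum chromatic number of the conflict graph G(A^k, P_i). -/
/-!
Statement 11: For positive integers k and m with 1 ≤ m ≤ 2^k, the minimum of |Im φ1| over all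
admissible k-shot codes (φ1, φ2) for the model (01;C1,C2;f) with |Im φ2| = m equals the minimum,
over all partitions {P_1, …, P_m} of A^k into m nonempty blocks, of
max_{1 ≤ i ≤ m} χ(G(A^k, P_i)), where χ denotes the minimum chromatic number of the conflict
graph. Both minima are stated in ℕ∞ via `sInf`.
-/

/-- The componentwise integer sum of two binary vectors. -/
def vsum {k : ℕ} (x y : Fin k → Fin 2) : Fin k → ℕ := fun i => (x i : ℕ) + (y i : ℕ)

/-- The cardinality of the image of an encoding map defined on `A^k × A^k`. -/
def imCard1 {k : ℕ} (φ : (Fin k → Fin 2) × (Fin k → Fin 2) → ℕ) : ℕ :=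
  (Finset.univ.image φ).card

/-- The cardinality of the image of an encoding map defined on `A^k`. -/
def imCard2 {k : ℕ} (φ : (Fin k → Fin 2) → ℕ) : ℕ := (Finset.univ.image φ).card

/-- Admissibility for the model (01;C1,C2;f). -/
def Admissible01 {k : ℕ} (φ1 : (Fin k → Fin 2) × (Fin k → Fin 2) → ℕ)
    (φ2 : (Fin k → Fin 2) → ℕ) : Prop :=
  ∀ x x' y y' : Fin k → Fin 2,
    φ1 (x, y) = φ1 (x', y') → φ2 y = φ2 y' → vsum x y = vsum x' y'

/-- The conflict graph G(M,L): vertices are pairs (x, y) ∈ M × L, with an edge between two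
vertices (x, y) and (x', y') iff x + y ≠ x' + y'. -/
def conflictGraph {k : ℕ} (M L : Finset (Fin k → Fin 2)) :
    SimpleGraph {p : (Fin k → Fin 2) × (Fin k → Fin 2) // p.1 ∈ M ∧ p.2 ∈ L} where
  Adj v w := vsum v.1.1 v.1.2 ≠ vsum w.1.1 w.1.2
  symm := ⟨fun _ _ h => Ne.symm h⟩
  loopless := ⟨fun _ h => h rfl⟩

/-!
The fibres of `φ2` partition `A^k` into `m` blocks `P_i`. Admissibility forces `φ1` to separate
distinct sums on `A^k × P_i`, so `|Im φ1| ≥ |A^k + P_i|`; and the conflict graph `G(A^k, P_i)` is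
complete multipartite with the level sets of `x + y` as parts, so its chromatic number is
`|A^k + P_i|`. Conversely, for a partition take `φ2(y)` to be the index of the block of `y` and
`φ1(x, y)` the position of `x + y` in an enumeration of `A^k + P_{φ2(y)}`; then
`|Im φ1| ≤ max_i |A^k + P_i|`.
-/

open Finset

theorem Finset.card_image_le_card_image_of_factor {α β γ : Type*} [DecidableEq β]
    [DecidableEq γ] {T : Finset α} {f : α → β} {g : α → γ}
    (h : ∀ p ∈ T, ∀ q ∈ T, f p = f q → g p = g q) :
    #(T.image g) ≤ #(T.image f) := by
  calc #(T.image g) ≤ #(T.image fun p => (f p, g p)) :=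
        card_le_card_of_surjOn Prod.snd fun c hc => by
          obtain ⟨p, hp, rfl⟩ := mem_image.mp (mem_coe.mp hc)
          exact ⟨(f p, g p), mem_image_of_mem _ hp, rfl⟩
    _ ≤ #(T.image f) := by
        refine card_le_card_of_injOn Prod.fst (fun c hc => ?_) fun c hc d hd hcd => ?_
        · obtain ⟨p, hp, rfl⟩ := mem_image.mp (mem_coe.mp hc)
          exact mem_image_of_mem f hp
        · obtain ⟨p, hp, rfl⟩ := mem_image.mp (mem_coe.mp hc)
          obtain ⟨q, hq, rfl⟩ := mem_image.mp (mem_coe.mp hd)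
          exact Prod.ext hcd (h p hp q hq hcd)

theorem Finset.exists_injOn_lt_card {β : Type*} [DecidableEq β] (s : Finset β) :
    ∃ e : β → ℕ, Set.InjOn e s ∧ ∀ b ∈ s, e b < #s :=
  ⟨s.toList.idxOf, fun _ hb _ _ he => (List.idxOf_inj (mem_toList.mpr hb)).mp he,
    fun _ hb => length_toList s ▸ List.idxOf_lt_length_iff.mpr (mem_toList.mpr hb)⟩

theorem SimpleGraph.chromaticNumber_eq_card_image_of_adj_iff {V β : Type*} [Fintype V]
    [DecidableEq β] (G : SimpleGraph V) (f : V → β) (hG : ∀ v w, G.Adj v w ↔ f v ≠ f w) :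
    G.chromaticNumber = #(univ.image f) := by
  apply le_antisymm
  · let C : G.Coloring (univ.image f) :=
      Coloring.mk (fun v => ⟨f v, mem_image_of_mem f (mem_univ v)⟩)
        fun hadj heq => (hG _ _).1 hadj (congrArg Subtype.val heq)
    simpa using C.colorable.chromaticNumber_le
  · refine le_chromaticNumber_iff_coloring.2 fun n C => ?_
    have hfactor : #(univ.image f) ≤ #(univ.image C) :=
      card_image_le_card_image_of_factor fun v _ w _ hC =>
        by_contra fun hne => C.valid ((hG v w).2 hne) hC
    exact_mod_cast hfactor.trans ((card_le_univ _).trans (by simp))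

section Partition

variable {α : Type*} [Fintype α] {m : ℕ}

theorem exists_index_of_biUnion_eq_univ [DecidableEq α] {P : Fin m → Finset α}
    (hdisj : ∀ i j, i ≠ j → Disjoint (P i) (P j)) (hcover : univ.biUnion P = univ) :
    ∃ c : α → Fin m, ∀ a i, a ∈ P i ↔ c a = i := by
  have hex : ∀ a, ∃ i, a ∈ P i := fun a => by
    obtain ⟨i, -, hi⟩ := mem_biUnion.mp (hcover ▸ mem_univ a)
    exact ⟨i, hi⟩
  choose c hc using hex
  refine ⟨c, fun a i => ⟨fun ha => ?_, fun h => h ▸ hc a⟩⟩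
  by_contra hne
  exact disjoint_left.mp (hdisj _ _ hne) (hc a) ha

theorem exists_surjective_fin_of_card_image {β : Type*} [DecidableEq β] (f : α → β)
    (hf : #(univ.image f) = m) :
    ∃ c : α → Fin m, Function.Surjective c ∧ ∀ a b, c a = c b ↔ f a = f b := by
  let e := (univ.image f).equivFin.trans (finCongr hf)
  refine ⟨fun a => e ⟨f a, mem_image_of_mem f (mem_univ a)⟩, fun i => ?_, fun a b => ?_⟩
  · obtain ⟨a, -, ha⟩ := mem_image.mp (e.symm i).2
    exact ⟨a, by simp [ha]⟩
  · simp [e.injective.eq_iff]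

theorem fibers_partition_of_surjective [DecidableEq α] {c : α → Fin m} (hc : Function.Surjective c) :
    (∀ i, (univ.filter (c · = i)).Nonempty) ∧
    (∀ i j, i ≠ j → Disjoint (univ.filter (c · = i)) (univ.filter (c · = j))) ∧
    univ.biUnion (fun i => univ.filter (c · = i)) = univ := by
  refine ⟨fun i => ?_, fun i j hij => ?_, ?_⟩
  · obtain ⟨a, ha⟩ := hc i
    exact ⟨a, by simpa using ha⟩
  · exact disjoint_filter.mpr fun a _ hi hj => hij (hi.symm.trans hj)
  · ext a; simp

end Partition

def sumset {k : ℕ} (M L : Finset (Fin k → Fin 2)) : Finset (Fin k → ℕ) :=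
  (M ×ˢ L).image fun p => vsum p.1 p.2

theorem chromaticNumber_conflictGraph {k : ℕ} (M L : Finset (Fin k → Fin 2)) :
    (conflictGraph M L).chromaticNumber = #(sumset M L) := by
  rw [SimpleGraph.chromaticNumber_eq_card_image_of_adj_iff _ (fun v => vsum v.1.1 v.1.2)
    fun _ _ => Iff.rfl]
  congr 2
  ext s
  simp [sumset]

section Codes

variable {k m : ℕ}

theorem card_sumset_le_imCard1 {φ1 : (Fin k → Fin 2) × (Fin k → Fin 2) → ℕ}
    {φ2 : (Fin k → Fin 2) → ℕ} (hadm : Admissible01 φ1 φ2) {L : Finset (Fin k → Fin 2)}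
    (hL : ∀ y ∈ L, ∀ y' ∈ L, φ2 y = φ2 y') :
    #(sumset univ L) ≤ imCard1 φ1 :=
  (card_image_le_card_image_of_factor fun p hp q hq hpq =>
      hadm p.1 q.1 p.2 q.2 hpq (hL _ (mem_product.mp hp).2 _ (mem_product.mp hq).2)).trans
    (card_le_card (image_subset_image (subset_univ _)))

theorem imCard2_val_comp {c : (Fin k → Fin 2) → Fin m} (hc : Function.Surjective c) :
    imCard2 (fun y => (c y : ℕ)) = m := by
  change #(univ.image (Fin.val ∘ c)) = m
  rw [← image_image, image_univ_of_surjective hc,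
    card_image_of_injective _ Fin.val_injective, card_fin]

theorem exists_admissible_imCard1_le_sup (P : Fin m → Finset (Fin k → Fin 2))
    (c : (Fin k → Fin 2) → Fin m) (hc : ∀ y, y ∈ P (c y)) :
    ∃ φ1, Admissible01 φ1 (fun y => (c y : ℕ)) ∧
      imCard1 φ1 ≤ univ.sup fun i => #(sumset univ (P i)) := by
  choose e he_inj he_lt using fun i => (sumset univ (P i)).exists_injOn_lt_card
  have hmem : ∀ x y, vsum x y ∈ sumset univ (P (c y)) := fun x y =>
    mem_image.mpr ⟨(x, y), mem_product.mpr ⟨mem_univ x, hc y⟩, rfl⟩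
  refine ⟨fun p => e (c p.2) (vsum p.1 p.2), fun x x' y y' h1 h2 => ?_, ?_⟩
  · have hcy : c y = c y' := Fin.val_injective h2
    simp only [hcy] at h1
    exact he_inj _ (hcy ▸ hmem x y) (hmem x' y') h1
  · refine (card_le_card fun n hn => ?_).trans (card_range _).le
    obtain ⟨⟨x, y⟩, -, rfl⟩ := mem_image.mp hn
    exact mem_range.mpr ((he_lt _ _ (hmem x y)).trans_le
      (le_sup (f := fun i => #(sumset univ (P i))) (mem_univ (c y))))

end Codes

theorem chi_m_eq_min_partition_general (k m : ℕ) :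
    sInf {n : ℕ∞ | ∃ (φ1 : (Fin k → Fin 2) × (Fin k → Fin 2) → ℕ)
        (φ2 : (Fin k → Fin 2) → ℕ),
        Admissible01 φ1 φ2 ∧ imCard2 φ2 = m ∧ n = (imCard1 φ1 : ℕ∞)} =
    sInf {n : ℕ∞ | ∃ P : Fin m → Finset (Fin k → Fin 2),
        (∀ i, (P i).Nonempty) ∧
        (∀ i j, i ≠ j → Disjoint (P i) (P j)) ∧
        (Finset.univ.biUnion P = (Finset.univ : Finset (Fin k → Fin 2))) ∧
        n = Finset.univ.sup
          (fun i => (conflictGraph (Finset.univ : Finset (Fin k → Fin 2)) (P i)).chromaticNumber)} := by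
  simp_rw [chromaticNumber_conflictGraph]
  apply le_antisymm
  · refine le_sInf ?_
    rintro _ ⟨P, hne, hdisj, hcover, rfl⟩
    obtain ⟨c, hc⟩ := exists_index_of_biUnion_eq_univ hdisj hcover
    have hsurj : Function.Surjective c := fun i =>
      (hne i).imp fun y hy => (hc y i).mp hy
    obtain ⟨φ1, hadm, hle⟩ :=
      exists_admissible_imCard1_le_sup P c fun y => (hc y (c y)).mpr rfl
    refine le_trans (sInf_le ⟨φ1, _, hadm, imCard2_val_comp hsurj, rfl⟩) ?_
    exact (ENat.natCast_le_natCast.mpr hle).trans_eq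
      (apply_sup_eq_sup_comp_of_linearOrder _ Nat.mono_cast rfl)
  · refine le_sInf ?_
    rintro _ ⟨φ1, φ2, hadm, hφ2, rfl⟩
    obtain ⟨c, hsurj, hc⟩ := exists_surjective_fin_of_card_image φ2 hφ2
    obtain ⟨hne, hdisj, hcover⟩ := fibers_partition_of_surjective hsurj
    refine le_trans (sInf_le ⟨_, hne, hdisj, hcover, rfl⟩) ?_
    refine Finset.sup_le fun i _ => ENat.natCast_le_natCast.mpr (card_sumset_le_imCard1 hadm ?_)
    simp only [mem_filter, mem_univ, true_and]
    exact fun y hy y' hy' => (hc y y').mp (hy.trans hy'.symm)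

theorem chi_m_eq_min_partition (k m : ℕ) (hk : 0 < k) (hm : 1 ≤ m) (hm' : m ≤ 2 ^ k) :
    sInf {n : ℕ∞ | ∃ (φ1 : (Fin k → Fin 2) × (Fin k → Fin 2) → ℕ)
        (φ2 : (Fin k → Fin 2) → ℕ),
        Admissible01 φ1 φ2 ∧ imCard2 φ2 = m ∧ n = (imCard1 φ1 : ℕ∞)} =
    sInf {n : ℕ∞ | ∃ P : Fin m → Finset (Fin k → Fin 2),
        (∀ i, (P i).Nonempty) ∧
        (∀ i j, i ≠ j → Disjoint (P i) (P j)) ∧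
        (Finset.univ.biUnion P = (Finset.univ : Finset (Fin k → Fin 2))) ∧
        n = Finset.univ.sup
          (fun i => (conflictGraph (Finset.univ : Finset (Fin k → Fin 2)) (P i)).chromaticNumber)} :=
  chi_m_eq_min_partition_general k m
end

section
/- Let k be a positive integer and for 0 ≤ ℓ ≤ 2^k let Q_k(ℓ) be the minimum of |A^k + L| over all subsets L ⊆ A^k with |L| = ℓ. Then for any admissible k-shot code (φ1, φ2) for the model (01;C1,C2;f) with |Im φ2| = m (1 ≤ m ≤ 2^k), one has |Im φ1| ≥ Q_k(⌈2^k / m⌉). -/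
/-- The sumset `M + L = {x + y : x ∈ M, y ∈ L}` (componentwise integer sums). -/
def sumSet {k : ℕ} (M L : Finset (Fin k → Fin 2)) : Finset (Fin k → ℕ) :=
  (M ×ˢ L).image fun p => vsum p.1 p.2

/-- `Q_k(ℓ)`: the minimum of `|A^k + L|` over all subsets `L ⊆ A^k` with `|L| = ℓ`. -/
noncomputable def Qk (k ℓ : ℕ) : ℕ :=
  sInf {n : ℕ | ∃ L : Finset (Fin k → Fin 2), L.card = ℓ ∧
    n = (sumSet (Finset.univ : Finset (Fin k → Fin 2)) L).card}

/-!
By pigeonhole some value of `φ2` is taken on a set `L` of `⌈2^k / m⌉` second inputs.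
On `A^k × L` admissibility says that `φ1` determines `x + y`, so `φ1` takes at least
`|A^k + L| ≥ Q_k(|L|)` values.
-/

open Finset

theorem Finset.exists_ceilDiv_le_card_fiber {α β : Type*} [Fintype α] [Nonempty α]
    [DecidableEq β] (f : α → β) : ∃ b, Fintype.card α ⌈/⌉ #(univ.image f) ≤ #{a | f a = b} := by
  set m := #(univ.image f)
  have hm : 0 < m := (univ_nonempty.image f).card_pos
  have hc : 0 < Fintype.card α ⌈/⌉ m := by
    rw [← not_le, ceilDiv_le_iff_le_mul hm]; simp
  have hlt : m * (Fintype.card α ⌈/⌉ m - 1) < #(univ : Finset α) := by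
    rw [card_univ, ← not_le, ← ceilDiv_le_iff_le_mul hm]; omega
  obtain ⟨b, -, hb⟩ := exists_lt_card_fiber_of_mul_lt_card_of_maps_to
    (fun a _ => mem_image_of_mem f (mem_univ a)) hlt
  exact ⟨b, by omega⟩

theorem Finset.card_image_le_card_image_of_factors {γ δ ε : Type*} [DecidableEq δ]
    [DecidableEq ε] {s : Finset γ} {g : γ → δ} {h : γ → ε}
    (hgh : ∀ p ∈ s, ∀ q ∈ s, h p = h q → g p = g q) :
    #(s.image g) ≤ #(s.image h) := by
  have hfst : Set.InjOn Prod.fst (s.image fun p => (h p, g p) : Set (ε × δ)) := by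
    rintro _ hp' _ hq' hpq
    obtain ⟨p, hp, rfl⟩ := mem_image.mp hp'
    obtain ⟨q, hq, rfl⟩ := mem_image.mp hq'
    simp only at hpq
    rw [hpq, hgh p hp q hq hpq]
  calc #(s.image g) = #((s.image fun p => (h p, g p)).image Prod.snd) := by
        rw [image_image]; rfl
    _ ≤ #(s.image fun p => (h p, g p)) := card_image_le
    _ = #((s.image fun p => (h p, g p)).image Prod.fst) := (card_image_of_injOn hfst).symm
    _ = #(s.image h) := by rw [image_image]; rfl

theorem Qk_le_card_sumSet {k : ℕ} (L : Finset (Fin k → Fin 2)) :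
    Qk k #L ≤ #(sumSet univ L) :=
  Nat.sInf_le ⟨L, rfl, rfl⟩

theorem card_sumSet_le_imCard1 {k : ℕ} {φ1 : (Fin k → Fin 2) × (Fin k → Fin 2) → ℕ}
    {φ2 : (Fin k → Fin 2) → ℕ} (hadm : Admissible01 φ1 φ2) {L : Finset (Fin k → Fin 2)} {b : ℕ}
    (hL : ∀ y ∈ L, φ2 y = b) :
    #(sumSet univ L) ≤ imCard1 φ1 := by
  refine (card_image_le_card_image_of_factors ?_).trans
    (card_le_card (image_subset_image (subset_univ _)))
  rintro ⟨x, y⟩ hxy ⟨x', y'⟩ hxy' hφ1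
  rw [mem_product] at hxy hxy'
  exact hadm x x' y y' hφ1 ((hL y hxy.2).trans (hL y' hxy'.2).symm)

theorem imCard1_ge_Qk_general (k m : ℕ)
    (φ1 : (Fin k → Fin 2) × (Fin k → Fin 2) → ℕ) (φ2 : (Fin k → Fin 2) → ℕ)
    (hadm : Admissible01 φ1 φ2) (him : imCard2 φ2 = m) :
    Qk k (2 ^ k ⌈/⌉ m) ≤ imCard1 φ1 := by
  obtain ⟨b, hb⟩ := exists_ceilDiv_le_card_fiber φ2
  obtain ⟨L, hLfiber, hL⟩ := exists_subset_card_eq hb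
  have hφ2L : ∀ y ∈ L, φ2 y = b := fun y hy => (mem_filter.mp (hLfiber hy)).2
  have hcard : Fintype.card (Fin k → Fin 2) ⌈/⌉ #(univ.image φ2) = 2 ^ k ⌈/⌉ m := by
    rw [← him]; simp [imCard2]
  calc Qk k (2 ^ k ⌈/⌉ m) = Qk k #L := by rw [hL, hcard]
    _ ≤ #(sumSet univ L) := Qk_le_card_sumSet L
    _ ≤ imCard1 φ1 := card_sumSet_le_imCard1 hadm hφ2L

theorem imCard1_ge_Qk (k m : ℕ) (hk : 0 < k) (hm : 1 ≤ m) (hm' : m ≤ 2 ^ k)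
    (φ1 : (Fin k → Fin 2) × (Fin k → Fin 2) → ℕ) (φ2 : (Fin k → Fin 2) → ℕ)
    (hadm : Admissible01 φ1 φ2) (him : imCard2 φ2 = m) :
    Qk k (2 ^ k ⌈/⌉ m) ≤ imCard1 φ1 :=
  imCard1_ge_Qk_general k m φ1 φ2 hadm him
end

section
/- For any positive integer k and any admissible k-shot code (φ1, φ2) for the model (01;C1,C2;f) with m = |Im φ2|, one has |Im φ1| ≥ 3^k · m^(1 − log 3), where the exponent uses the base-2 logarithm. -/
/-!
Let `B` be a largest fibre of `φ2`, so `|B| ≥ 2^k / m`. By admissibility, `φ1` restricted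
to `A^k × B` determines `x + y`, hence `|Im φ1| ≥ |A^k + B|`. Splitting `B ⊆ A^(k+1)` by the
first coordinate into `B₀, B₁ ⊆ A^k`, the sumset `A^(k+1) + B` contains `A^k + B₀`,
`(A^k + B₀) ∪ (A^k + B₁)` and `A^k + B₁` behind the first coordinates `0, 1, 2`. With the
concavity inequality `2 (x + y)^c ≤ x^c + y^c + max x^c y^c` for `c = log₂ (3/2)`, induction on
`k` gives `|A^k + B| ≥ 2^k |B|^c`, and `2^k (2^k / m)^c = 3^k m^(1 - log₂ 3)`.
-/

open Finset Real

lemma logb_three_halves_pos : 0 < logb 2 (3 / 2) := logb_pos (by norm_num) (by norm_num)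

lemma logb_three_halves_le_one : logb 2 (3 / 2) ≤ 1 :=
  (logb_le_iff_le_rpow (by norm_num) (by norm_num)).2 (by norm_num)

lemma two_rpow_logb_three_halves : (2 : ℝ) ^ logb 2 (3 / 2) = 3 / 2 :=
  rpow_logb (by norm_num) (by norm_num) (by norm_num)

/-- Concavity of `u ↦ u ^ c` on the segment from `(x + y, 0)` to `((x + y)/2, (x + y)/2)`, which
passes through `(x, y)`; at the second endpoint the bound holds because `2 ^ c ≤ 3 / 2`. -/
lemma two_mul_add_rpow_le {c x y : ℝ} (hc0 : 0 ≤ c) (hc1 : c ≤ 1)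
    (h2c : (2 : ℝ) ^ c ≤ 3 / 2) (hy : 0 ≤ y) (hyx : y ≤ x) :
    2 * (x + y) ^ c ≤ 2 * x ^ c + y ^ c := by
  rcases hy.eq_or_lt with rfl | hy
  · simpa using zero_rpow_nonneg c
  have hs : 0 < x + y := by linarith
  set t := 2 * y / (x + y)
  have ht0 : 0 ≤ t := by positivity
  have ht1 : t ≤ 1 := by rw [div_le_one hs]; linarith
  have hyt : t * ((x + y) / 2) = y := by simp only [t]; field_simp
  have hxt : (1 - t) * (x + y) + t * ((x + y) / 2) = x := by linear_combination -hyt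
  have hconc := (concaveOn_rpow hc0 hc1).2
  have hx : (1 - t) * (x + y) ^ c + t * ((x + y) / 2) ^ c ≤ x ^ c := by
    simpa only [smul_eq_mul, hxt] using hconc (Set.mem_Ici.2 hs.le)
      (Set.mem_Ici.2 (half_pos hs).le) (sub_nonneg.2 ht1) ht0 (sub_add_cancel 1 t)
  have hy' : (1 - t) * 0 ^ c + t * ((x + y) / 2) ^ c ≤ y ^ c := by
    simpa only [smul_eq_mul, mul_zero, zero_add, hyt] using hconc (Set.mem_Ici.2 le_rfl)
      (Set.mem_Ici.2 (half_pos hs).le) (sub_nonneg.2 ht1) ht0 (sub_add_cancel 1 t)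
  have hhalf : 2 / 3 * (x + y) ^ c ≤ ((x + y) / 2) ^ c := by
    rw [div_rpow hs.le zero_le_two, le_div_iff₀ (by positivity)]
    nlinarith [rpow_nonneg hs.le c]
  nlinarith [rpow_nonneg hs.le c, zero_rpow_nonneg c]

lemma two_mul_add_rpow_le_add_add_max {c x y : ℝ} (hc0 : 0 ≤ c) (hc1 : c ≤ 1)
    (h2c : (2 : ℝ) ^ c ≤ 3 / 2) (hx : 0 ≤ x) (hy : 0 ≤ y) :
    2 * (x + y) ^ c ≤ x ^ c + y ^ c + max (x ^ c) (y ^ c) := by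
  rcases le_total y x with hyx | hxy
  · rw [max_eq_left (rpow_le_rpow hy hyx hc0)]
    linarith [two_mul_add_rpow_le hc0 hc1 h2c hy hyx]
  · rw [max_eq_right (rpow_le_rpow hx hxy hc0), add_comm x y]
    linarith [two_mul_add_rpow_le hc0 hc1 h2c hx hxy]

section Sumset

variable {k : ℕ}

def cubeSumset (B : Finset (Fin k → Fin 2)) : Finset (Fin k → ℕ) :=
  (univ ×ˢ B).image fun p => vsum p.1 p.2

def headFiber (B : Finset (Fin (k + 1) → Fin 2)) (v : Fin 2) : Finset (Fin k → Fin 2) :=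
  {z | Fin.cons v z ∈ B}

lemma card_filter_head_eq_card_headFiber (B : Finset (Fin (k + 1) → Fin 2)) (v : Fin 2) :
    #{y ∈ B | y 0 = v} = #(headFiber B v) := by
  refine card_nbij' Fin.tail (fun z => Fin.cons v z) ?_ ?_ ?_ ?_
  · intro y hy
    obtain ⟨hyB, rfl⟩ := mem_filter.1 hy
    simpa [headFiber] using hyB
  · intro z hz
    simpa [headFiber] using hz
  · intro y hy
    obtain ⟨-, rfl⟩ := mem_filter.1 hy
    exact Fin.cons_self_tail y
  · intro z _
    simp

lemma card_eq_card_headFiber_add_card_headFiber (B : Finset (Fin (k + 1) → Fin 2)) :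
    #B = #(headFiber B 0) + #(headFiber B 1) := by
  rw [card_eq_sum_card_fiberwise (f := fun y => y 0) (t := univ)
      (fun _ _ => mem_coe.2 (mem_univ _)), Fin.sum_univ_two,
    card_filter_head_eq_card_headFiber, card_filter_head_eq_card_headFiber]

lemma vsum_cons (a b : Fin 2) (x y : Fin k → Fin 2) :
    vsum (Fin.cons a x) (Fin.cons b y) =
      (Fin.cons ((a : ℕ) + b) (vsum x y) : Fin (k + 1) → ℕ) := by
  ext i
  cases i using Fin.cases <;> rfl

lemma cons_mem_cubeSumset {B : Finset (Fin (k + 1) → Fin 2)} {v : Fin 2} {z : Fin k → ℕ}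
    (hz : z ∈ cubeSumset (headFiber B v)) (a : Fin 2) :
    (Fin.cons ((a : ℕ) + v) z : Fin (k + 1) → ℕ) ∈ cubeSumset B := by
  obtain ⟨⟨x, y⟩, hy, rfl⟩ := mem_image.1 hz
  refine mem_image.2 ⟨(Fin.cons a x, Fin.cons v y), ?_, vsum_cons a v x y⟩
  simpa [headFiber] using hy

lemma sum_card_le_card_of_cons_mem {α : Type*} [DecidableEq α] {S : Finset (Fin (k + 1) → α)}
    {J : Finset α} {T : α → Finset (Fin k → α)}
    (h : ∀ j ∈ J, ∀ z ∈ T j, (Fin.cons j z : Fin (k + 1) → α) ∈ S) :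
    ∑ j ∈ J, #(T j) ≤ #S := by
  calc ∑ j ∈ J, #(T j)
      = ∑ j ∈ J, #((T j).image fun z => (Fin.cons j z : Fin (k + 1) → α)) := by
        simp only [card_image_of_injective _ (Fin.cons_right_injective _)]
    _ = #(J.biUnion fun j => (T j).image fun z => (Fin.cons j z : Fin (k + 1) → α)) := by
        refine (card_biUnion fun i _ j _ hij => disjoint_left.2 ?_).symm
        simp only [mem_image]
        rintro _ ⟨z, -, rfl⟩ ⟨z', -, h⟩
        exact hij (by simpa using (congrFun h 0).symm)
    _ ≤ #S := card_le_card <| biUnion_subset.2 fun j hj => image_subset_iff.2 (h j hj)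

lemma card_add_card_union_add_card_le_card_cubeSumset (B : Finset (Fin (k + 1) → Fin 2)) :
    #(cubeSumset (headFiber B 0)) + #(cubeSumset (headFiber B 0) ∪ cubeSumset (headFiber B 1))
      + #(cubeSumset (headFiber B 1)) ≤ #(cubeSumset B) := by
  set S₀ := cubeSumset (headFiber B 0)
  set S₁ := cubeSumset (headFiber B 1)
  have h := sum_card_le_card_of_cons_mem (S := cubeSumset B) (J := {0, 1, 2})
    (T := fun j => if j = 0 then S₀ else if j = 1 then S₀ ∪ S₁ else S₁) ?_
  · simpa [add_assoc] using h
  simp only [mem_insert, mem_singleton]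
  rintro j (rfl | rfl | rfl) z hz
  · simpa using cons_mem_cubeSumset (v := 0) (by simpa using hz) 0
  · rcases mem_union.1 (by simpa using hz) with hz | hz
    · simpa using cons_mem_cubeSumset (v := 0) hz 1
    · simpa using cons_mem_cubeSumset (v := 1) hz 0
  · simpa using cons_mem_cubeSumset (v := 1) (by simpa using hz) 1

end Sumset

theorem two_pow_mul_card_rpow_le_card_cubeSumset {c : ℝ} (hc0 : 0 < c) (hc1 : c ≤ 1)
    (h2c : (2 : ℝ) ^ c ≤ 3 / 2) : ∀ {k : ℕ} (B : Finset (Fin k → Fin 2)),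
    2 ^ k * (#B : ℝ) ^ c ≤ #(cubeSumset B)
  | 0, B => by
    rcases B.eq_empty_or_nonempty with rfl | hB
    · simp [zero_rpow hc0.ne']
    · have hcard : #B = 1 := le_antisymm (by simpa using card_le_univ B) hB.card_pos
      have hS : 0 < #(cubeSumset B) := ((univ_nonempty.product hB).image _).card_pos
      simpa [hcard] using hS
  | k + 1, B => by
    have hB : (#B : ℝ) = #(headFiber B 0) + #(headFiber B 1) := by
      exact_mod_cast card_eq_card_headFiber_add_card_headFiber B
    set b₀ : ℝ := ((#(headFiber B 0) : ℕ) : ℝ)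
    set b₁ : ℝ := ((#(headFiber B 1) : ℕ) : ℝ)
    set S₀ := cubeSumset (headFiber B 0)
    set S₁ := cubeSumset (headFiber B 1)
    have hS : (#S₀ : ℝ) + #(S₀ ∪ S₁) + #S₁ ≤ #(cubeSumset B) := by
      exact_mod_cast card_add_card_union_add_card_le_card_cubeSumset B
    have hmax : max (#S₀ : ℝ) #S₁ ≤ #(S₀ ∪ S₁) := by
      exact_mod_cast max_le (card_le_card subset_union_left) (card_le_card subset_union_right)
    have ih₀ := two_pow_mul_card_rpow_le_card_cubeSumset hc0 hc1 h2c (headFiber B 0)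
    have ih₁ := two_pow_mul_card_rpow_le_card_cubeSumset hc0 hc1 h2c (headFiber B 1)
    calc (2 : ℝ) ^ (k + 1) * (#B : ℝ) ^ c = 2 ^ k * (2 * (b₀ + b₁) ^ c) := by rw [hB]; ring
      _ ≤ 2 ^ k * (b₀ ^ c + b₁ ^ c + max (b₀ ^ c) (b₁ ^ c)) := by
        gcongr
        exact two_mul_add_rpow_le_add_add_max hc0.le hc1 h2c (by positivity) (by positivity)
      _ = 2 ^ k * b₀ ^ c + 2 ^ k * b₁ ^ c + max (2 ^ k * b₀ ^ c) (2 ^ k * b₁ ^ c) := by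
        rw [← mul_max_of_nonneg _ _ (by positivity)]; ring
      _ ≤ #S₀ + #S₁ + max (#S₀ : ℝ) #S₁ := by gcongr
      _ ≤ #(cubeSumset B) := by linarith

lemma card_image_le_card_image_of_eq {α β γ : Type*} [DecidableEq β] [DecidableEq γ]
    {s : Finset α} {f : α → β} {g : α → γ}
    (h : ∀ a ∈ s, ∀ b ∈ s, f a = f b → g a = g b) :
    #(s.image g) ≤ #(s.image f) := by
  have hinj : Set.InjOn Prod.fst (s.image fun a => (f a, g a) : Set (β × γ)) := by
    simp only [coe_image, Set.InjOn, Set.forall_mem_image, Prod.mk.injEq]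
    exact fun a ha b hb hab => ⟨hab, h a ha b hb hab⟩
  calc #(s.image g) = #((s.image fun a => (f a, g a)).image Prod.snd) := by rw [image_image]; rfl
    _ ≤ #(s.image fun a => (f a, g a)) := card_image_le
    _ = #((s.image fun a => (f a, g a)).image Prod.fst) := (card_image_of_injOn hinj).symm
    _ = #(s.image f) := by rw [image_image]; rfl

lemma card_cubeSumset_le_imCard1 {k : ℕ} {φ1 : (Fin k → Fin 2) × (Fin k → Fin 2) → ℕ}
    {φ2 : (Fin k → Fin 2) → ℕ} (hadm : Admissible01 φ1 φ2) {B : Finset (Fin k → Fin 2)}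
    (hB : ∀ y ∈ B, ∀ y' ∈ B, φ2 y = φ2 y') : #(cubeSumset B) ≤ imCard1 φ1 :=
  calc #(cubeSumset B) ≤ #((univ ×ˢ B).image φ1) :=
        card_image_le_card_image_of_eq fun _ hp _ hq hpq =>
          hadm _ _ _ _ hpq (hB _ (mem_product.1 hp).2 _ (mem_product.1 hq).2)
    _ ≤ imCard1 φ1 := card_le_card (image_subset_image (subset_univ _))

lemma three_pow_mul_rpow_one_sub_logb (k : ℕ) {m : ℝ} (hm : 0 ≤ m) :
    3 ^ k * m ^ (1 - logb 2 3) = 2 ^ k * (2 ^ k / m) ^ logb 2 (3 / 2) := by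
  have hc : 1 - logb 2 3 = -logb 2 (3 / 2) := by
    rw [logb_div three_ne_zero two_ne_zero, logb_self_eq_one one_lt_two]; ring
  rw [hc, rpow_neg hm, div_rpow (by positivity) hm, ← rpow_pow_comm zero_le_two,
    rpow_logb zero_lt_two (by norm_num) (by norm_num), div_pow]
  field_simp

theorem imCard1_lower_bound_general (k : ℕ)
    (φ1 : (Fin k → Fin 2) × (Fin k → Fin 2) → ℕ) (φ2 : (Fin k → Fin 2) → ℕ)
    (hadm : Admissible01 φ1 φ2) :
    (3 : ℝ) ^ k * (imCard2 φ2 : ℝ) ^ (1 - Real.logb 2 3) ≤ (imCard1 φ1 : ℝ) := by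
  have hm : 0 < imCard2 φ2 := (univ_nonempty.image φ2).card_pos
  obtain ⟨t, -, hB⟩ := exists_le_card_fiber_of_nsmul_le_card_of_maps_to
    (fun y _ => mem_image_of_mem φ2 (mem_univ y)) (univ_nonempty.image φ2)
    (s := univ) (b := (2 : ℝ) ^ k / imCard2 φ2) (by
      rw [show #(univ.image φ2) = imCard2 φ2 from rfl, nsmul_eq_mul,
        mul_div_cancel₀ _ (by positivity)]
      simp)
  calc (3 : ℝ) ^ k * (imCard2 φ2 : ℝ) ^ (1 - logb 2 3)
      = 2 ^ k * (2 ^ k / imCard2 φ2) ^ logb 2 (3 / 2) :=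
        three_pow_mul_rpow_one_sub_logb k (Nat.cast_nonneg _)
    _ ≤ 2 ^ k * (#{y ∈ univ | φ2 y = t} : ℝ) ^ logb 2 (3 / 2) := by
        gcongr
        exact logb_three_halves_pos.le
    _ ≤ #(cubeSumset {y ∈ univ | φ2 y = t}) :=
        two_pow_mul_card_rpow_le_card_cubeSumset logb_three_halves_pos
          logb_three_halves_le_one two_rpow_logb_three_halves.le _
    _ ≤ imCard1 φ1 := by
        exact_mod_cast card_cubeSumset_le_imCard1 hadm (by simp +contextual)

theorem imCard1_lower_bound (k : ℕ) (hk : 0 < k)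
    (φ1 : (Fin k → Fin 2) × (Fin k → Fin 2) → ℕ) (φ2 : (Fin k → Fin 2) → ℕ)
    (hadm : Admissible01 φ1 φ2) :
    (3 : ℝ) ^ k * (imCard2 φ2 : ℝ) ^ (1 - Real.logb 2 3) ≤ (imCard1 φ1 : ℝ) :=
  imCard1_lower_bound_general k φ1 φ2 hadm
end

section
/- For any positive integers k and k1 with 1 ≤ k1 ≤ k, there exists an admissible k-shot code (φ1, φ2) for the model (01;C1,C2;f) such that |Im φ1| = 3^(k1−1) · 2^(k−k1+1) and |Im φ2| = 2^(k−k1+1). (It is given by φ1(x, y) = (x_1+y_1, …, x_{k1−1}+y_{k1−1}, x_{k1}, …, x_k) and φ2(y) = (0, …, 0, y_{k1}, …, y_k).) -/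
def bitSum (a b : Fin 2) : Fin 3 := ⟨a + b, by omega⟩

lemma bitSum_uncurry_surjective : Function.Surjective (Function.uncurry bitSum) := by
  decide

section SplitCode

variable {ι : Type*} (p : ι → Prop) [DecidablePred p]

def splitCode1 (xy : (ι → Fin 2) × (ι → Fin 2)) : ({i // p i} → Fin 3) × ({i // ¬p i} → Fin 2) :=
  (fun i => bitSum (xy.1 i) (xy.2 i), fun i => xy.1 i)

def splitCode2 (y : ι → Fin 2) : {i // ¬p i} → Fin 2 := fun i => y i

lemma vsum_eq_of_splitCode_eq {x x' y y' : ι → Fin 2}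
    (h1 : splitCode1 p (x, y) = splitCode1 p (x', y')) (h2 : splitCode2 p y = splitCode2 p y')
    (i : ι) : (x i : ℕ) + y i = x' i + y' i := by
  by_cases hi : p i
  · exact congrArg Fin.val (congrFun (congrArg Prod.fst h1) ⟨i, hi⟩)
  · have hx : x i = x' i := congrFun (congrArg Prod.snd h1) ⟨i, hi⟩
    have hy : y i = y' i := congrFun h2 ⟨i, hi⟩
    rw [hx, hy]

lemma splitCode1_surjective : Function.Surjective (splitCode1 p (ι := ι)) := by
  rintro ⟨u, v⟩
  choose s hs using fun i : {i // p i} => bitSum_uncurry_surjective (u i)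
  refine ⟨((Equiv.piEquivPiSubtypeProd p _).symm (fun i => (s i).1, v),
    (Equiv.piEquivPiSubtypeProd p _).symm (fun i => (s i).2, fun _ => 0)), ?_⟩
  ext i
  · simp [splitCode1, ← hs, i.2, Function.uncurry]
  · simp [splitCode1, i.2]

lemma splitCode2_surjective : Function.Surjective (splitCode2 p (ι := ι)) := fun v =>
  ⟨(Equiv.piEquivPiSubtypeProd p _).symm (fun _ => 0, v), by
    funext i; simp [splitCode2, i.2]⟩

end SplitCode

noncomputable def encodeNat {β : Type*} [Fintype β] (b : β) : ℕ := Fintype.equivFin β b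

lemma encodeNat_injective {β : Type*} [Fintype β] : Function.Injective (encodeNat (β := β)) :=
  fun _ _ h => (Fintype.equivFin β).injective (Fin.val_injective h)

lemma card_image_encodeNat_comp {α β : Type*} [Fintype α] [Fintype β] {g : α → β}
    (hg : Function.Surjective g) :
    (Finset.univ.image (encodeNat ∘ g)).card = Fintype.card β := by
  classical
  rw [← Finset.image_image (f := g), Finset.image_univ_of_surjective hg,
    Finset.card_image_of_injective _ encodeNat_injective, Finset.card_univ]

theorem exists_code_01 (k k1 : ℕ) (hk1 : 1 ≤ k1) (hk1' : k1 ≤ k) :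
    ∃ (φ1 : (Fin k → Fin 2) × (Fin k → Fin 2) → ℕ) (φ2 : (Fin k → Fin 2) → ℕ),
      Admissible01 φ1 φ2 ∧
      imCard1 φ1 = 3 ^ (k1 - 1) * 2 ^ (k - k1 + 1) ∧
      imCard2 φ2 = 2 ^ (k - k1 + 1) := by
  let p : Fin k → Prop := fun i => i < k1 - 1
  have hcard : Fintype.card {i // p i} = k1 - 1 := Fintype.card_fin_lt_of_le (by omega)
  have hcard' : Fintype.card {i // ¬p i} = k - k1 + 1 := by
    rw [Fintype.card_subtype_compl, hcard, Fintype.card_fin]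
    omega
  refine ⟨encodeNat ∘ splitCode1 p, encodeNat ∘ splitCode2 p,
    fun x x' y y' h1 h2 => funext (vsum_eq_of_splitCode_eq p
      (encodeNat_injective h1) (encodeNat_injective h2)), ?_, ?_⟩
  · rw [imCard1, card_image_encodeNat_comp (splitCode1_surjective p)]
    simp [hcard, hcard']
  · rw [imCard2, card_image_encodeNat_comp (splitCode2_surjective p)]
    simp [hcard']
end
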